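/- arXiv:1710.00605 — 8 statements merged into one kernel-verified Lean document; each statement's English description precedes it below -/
import Mathlib

section
/- The set C_q = {11i+j : 0 ≤ i ≤ q−1, j ∈ {0,1,4,5}} is an identifying code in the circulant graph C_{11q}(1,3) for every integer q ≥ 1. -/
/-- Closed neighbourhood of `u` in the circulant graph `C_n(1,3)`. -/
def nbhd {n : ℕ} (u : ZMod n) : Finset (ZMod n) := {u - 3, u - 1, u, u + 1, u + 3}

/-- Identifying set `I(C;u) = N[u] ∩ C`. -/
def iset {n : ℕ} (C : Finset (ZMod n)) (u : ZMod n) : Finset (ZMod n) := nbhd u ∩ C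

/-- `C` is an identifying code in `C_n(1,3)`. -/
def IsIdentifying {n : ℕ} (C : Finset (ZMod n)) : Prop :=
  (∀ u : ZMod n, (iset C u).Nonempty) ∧
    ∀ u v : ZMod n, u ≠ v → iset C u ≠ iset C v

/-- `C` is a locating-dominating code in `C_n(1,3)`. -/
def IsLocDom {n : ℕ} (C : Finset (ZMod n)) : Prop :=
  (∀ u : ZMod n, (iset C u).Nonempty) ∧
    ∀ u v : ZMod n, u ∉ C → v ∉ C → u ≠ v → iset C u ≠ iset C v

theorem Cq_identifying (q : ℕ) (hq : 1 ≤ q) :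
    IsIdentifying ((Finset.range q).biUnion (fun i =>
      ({((11 * i : ℕ) : ZMod (11 * q)), ((11 * i + 1 : ℕ) : ZMod (11 * q)),
        ((11 * i + 4 : ℕ) : ZMod (11 * q)), ((11 * i + 5 : ℕ) : ZMod (11 * q))} :
        Finset (ZMod (11 * q))))) := by
  haveI : NeZero (11 * q) := ⟨by omega⟩
  set C : Finset (ZMod (11 * q)) := (Finset.range q).biUnion (fun i =>
      ({((11 * i : ℕ) : ZMod (11 * q)), ((11 * i + 1 : ℕ) : ZMod (11 * q)),
        ((11 * i + 4 : ℕ) : ZMod (11 * q)), ((11 * i + 5 : ℕ) : ZMod (11 * q))} :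
        Finset (ZMod (11 * q)))) with hC
  have hdvd : (11 : ℕ) ∣ 11 * q := ⟨q, rfl⟩
  set φ : ZMod (11 * q) →+* ZMod 11 := ZMod.castHom hdvd (ZMod 11) with hphi
  have memC : ∀ x : ZMod (11 * q), x ∈ C ↔ φ x ∈ ({0,1,4,5} : Finset (ZMod 11)) := by
    intro x
    constructor
    · intro hx
      rw [hC] at hx
      simp only [Finset.mem_biUnion, Finset.mem_range, Finset.mem_insert,
        Finset.mem_singleton] at hx
      obtain ⟨i, hi, hx⟩ := hx
      rcases hx with h|h|h|h <;> subst h <;> rw [hphi, map_natCast] <;>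
        simp [Nat.cast_add, Nat.cast_mul, ZMod.natCast_self, show (11:ZMod 11) = 0 by decide]
    · intro hx
      have hval : x.val < 11 * q := ZMod.val_lt x
      have hxeq : ((x.val : ℕ) : ZMod (11 * q)) = x := ZMod.natCast_rightInverse x
      have hmod : φ x = ((x.val % 11 : ℕ) : ZMod 11) := by
        conv_lhs => rw [← hxeq]
        rw [map_natCast, ZMod.natCast_mod]
      have hij : 11 * (x.val / 11) + x.val % 11 = x.val := Nat.div_add_mod x.val 11
      have hjlt : x.val % 11 < 11 := Nat.mod_lt _ (by norm_num)
      have hiq : x.val / 11 < q := by omega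
      have hT : ((x.val % 11 : ℕ) : ZMod 11) ∈ ({0,1,4,5} : Finset (ZMod 11)) := hmod ▸ hx
      have hj4 : x.val % 11 = 0 ∨ x.val % 11 = 1 ∨ x.val % 11 = 4 ∨ x.val % 11 = 5 := by
        generalize hg : x.val % 11 = j at hT hjlt
        interval_cases j <;> revert hT <;> decide
      rw [hC]
      simp only [Finset.mem_biUnion, Finset.mem_range, Finset.mem_insert,
        Finset.mem_singleton]
      refine ⟨x.val / 11, hiq, ?_⟩
      rcases hj4 with h|h|h|h
      · left
        conv_lhs => rw [← hxeq]
        congr 1; omega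
      · right; left
        conv_lhs => rw [← hxeq]
        congr 1; omega
      · right; right; left
        conv_lhs => rw [← hxeq]
        congr 1; omega
      · right; right; right
        conv_lhs => rw [← hxeq]
        congr 1; omega
  have himgnbhd : ∀ u : ZMod (11 * q), Finset.image φ (nbhd u) = nbhd (φ u) := by
    intro u
    simp [nbhd, Finset.image_insert, map_sub, map_add, map_ofNat, map_one]
  have isetf : ∀ u : ZMod (11 * q),
      iset C u = (nbhd u).filter (fun x => φ x ∈ ({0,1,4,5} : Finset (ZMod 11))) := by
    intro u; ext x
    simp [iset, Finset.mem_filter, Finset.mem_inter, memC x]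
  have himg : ∀ u : ZMod (11 * q),
      Finset.image φ (iset C u)
        = (nbhd (φ u)).filter (fun x => x ∈ ({0,1,4,5} : Finset (ZMod 11))) := by
    intro u
    conv_rhs => rw [← himgnbhd u, Finset.filter_image]
    rw [isetf u]
  have hNE : ∀ r : ZMod 11,
      ((nbhd r).filter (fun x => x ∈ ({0,1,4,5} : Finset (ZMod 11)))).Nonempty := by decide
  have hInj : ∀ r s : ZMod 11,
      (nbhd r).filter (fun x => x ∈ ({0,1,4,5} : Finset (ZMod 11)))
        = (nbhd s).filter (fun x => x ∈ ({0,1,4,5} : Finset (ZMod 11))) → r = s := by decide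
  have hne : ∀ u : ZMod (11 * q), (iset C u).Nonempty := by
    intro u
    have h := hNE (φ u)
    rw [← himg u] at h
    exact Finset.image_nonempty.mp h
  refine ⟨hne, ?_⟩
  intro u v huv heq
  apply huv
  have h1 : φ u = φ v := hInj _ _ (by rw [← himg, ← himg, heq])
  obtain ⟨x, hxu⟩ := hne u
  have hxv : x ∈ iset C v := heq ▸ hxu
  have hxu' : x ∈ nbhd u := (Finset.mem_inter.mp hxu).1
  have hxv' : x ∈ nbhd v := (Finset.mem_inter.mp hxv).1
  have hoff : ∀ w : ZMod (11 * q), x ∈ nbhd w →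
      ∃ a : ZMod (11 * q), a ∈ ({-3,-1,0,1,3} : Finset (ZMod (11 * q))) ∧ x = w + a := by
    intro w hw
    simp only [nbhd, Finset.mem_insert, Finset.mem_singleton] at hw
    rcases hw with h|h|h|h|h
    · exact ⟨-3, by simp, by rw [h]; ring⟩
    · exact ⟨-1, by simp, by rw [h]; ring⟩
    · exact ⟨0, by simp, by rw [h, add_zero]⟩
    · exact ⟨1, by simp, by rw [h]⟩
    · exact ⟨3, by simp, by rw [h]⟩
  obtain ⟨a, ha, hxa⟩ := hoff u hxu'
  obtain ⟨b, hb, hxb⟩ := hoff v hxv'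
  have hab : φ a = φ b := by
    have h2 : u + a = v + b := hxa ▸ hxb
    have h3 := congrArg φ h2
    rw [map_add, map_add, h1] at h3
    exact add_left_cancel h3
  have haeqb : a = b := by
    simp only [Finset.mem_insert, Finset.mem_singleton] at ha hb
    rcases ha with rfl|rfl|rfl|rfl|rfl <;> rcases hb with rfl|rfl|rfl|rfl|rfl <;>
      first
      | rfl
      | (exfalso
         simp only [map_neg, map_ofNat, map_one, map_zero] at hab
         revert hab; decide)
  subst haeqb
  have h2 : u + a = v + a := hxa ▸ hxb
  exact add_right_cancel h2
end

section
/- For every integer q ≥ 1, the set C_q ∪ {11q} is an identifying code in the circulant graph C_{11q+1}(1,3), where C_q = {11i+j : 0 ≤ i ≤ q−1, j ∈ {0,1,4,5}}. -/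
/-! ### Auxiliary machinery -/

lemma emod_eq_sub' (x n k : ℤ) (h1 : 0 ≤ x - n*k) (h2 : x - n*k < n) : x % n = x - n*k := by
  conv_lhs => rw [show x = (x - n*k) + n*k by ring]
  rw [Int.add_mul_emod_self_left, Int.emod_eq_of_lt h1 h2]

def bitB (a : ℕ) (t : ℤ) : Bool :=
  let m := ((a : ℤ) + t) % 34 % 11
  m == 0 || m == 1 || m == 4 || m == 5

def eE (t : ℤ) : Bool := t == -3 || t == -1 || t == 0 || t == 1 || t == 3

def Tlist : List ℤ := [-9,-8,-7,-6,-5,-4,-3,-2,-1,0,1,2,3,4,5,6,7,8,9]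
def Dlist : List ℤ := [-6,-4,-3,-2,-1,1,2,3,4,6]

lemma core1 : ∀ a < 34, ∃ t ∈ ([-3,-1,0,1,3] : List ℤ), bitB a t := by decide

lemma core2 : ∀ a < 34, ∀ d ∈ Dlist, ∃ t ∈ Tlist, (eE t ≠ eE (t - d)) ∧ bitB a t := by decide

def tfer (n a : ℕ) : ℕ :=
  if a ≤ 9 then a else if n ≤ a + 9 then 34 + a - n else 9 + (a - 9) % 11

lemma tfer_lt (n a : ℕ) (h : a < n) : tfer n a < 34 := by
  unfold tfer; split_ifs <;> omega

lemma bridge (q a : ℕ) (hq : 2 ≤ q) (ha : a < 11*q+1) (t : ℤ) (ht1 : -9 ≤ t) (ht2 : t ≤ 9) :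
    bitB (tfer (11*q+1) a) t = true ↔
      (((a:ℤ) + t) % (11*(q:ℤ)+1)) % 11 = 0 ∨ (((a:ℤ) + t) % (11*(q:ℤ)+1)) % 11 = 1 ∨
      (((a:ℤ) + t) % (11*(q:ℤ)+1)) % 11 = 4 ∨ (((a:ℤ) + t) % (11*(q:ℤ)+1)) % 11 = 5 := by
  simp only [bitB, tfer, Bool.or_eq_true, beq_iff_eq]
  have hmodel : ∀ a' : ℕ, ∀ k : ℤ, 0 ≤ (a':ℤ) + t - 34*k → (a':ℤ) + t - 34*k < 34 →
      ((a':ℤ) + t) % 34 = (a':ℤ) + t - 34*k := fun a' k h1 h2 => emod_eq_sub' _ _ k h1 h2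
  have hreal : ∀ k : ℤ, 0 ≤ (a:ℤ) + t - (11*(q:ℤ)+1)*k → (a:ℤ) + t - (11*(q:ℤ)+1)*k < 11*(q:ℤ)+1 →
      ((a:ℤ) + t) % (11*(q:ℤ)+1) = (a:ℤ) + t - (11*(q:ℤ)+1)*k := fun k h1 h2 => emod_eq_sub' _ _ k h1 h2
  split_ifs with h1 h2
  · rcases lt_or_ge ((a:ℤ) + t) 0 with hc | hc
    · rw [hreal (-1) (by omega) (by omega), hmodel a (-1) (by omega) (by omega)]; omega
    · rw [hreal 0 (by omega) (by omega), hmodel a 0 (by omega) (by omega)]; omega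
  · rcases lt_or_ge ((a:ℤ) + t) (11*(q:ℤ)+1) with hc | hc
    · rw [hreal 0 (by omega) (by omega), hmodel (34 + a - (11*q+1)) 0 (by omega) (by omega)]; omega
    · rw [hreal 1 (by omega) (by omega), hmodel (34 + a - (11*q+1)) 1 (by omega) (by omega)]; omega
  · rw [hreal 0 (by omega) (by omega), hmodel (9 + (a - 9) % 11) 0 (by omega) (by omega)]; omega

/-- The code. -/
def CC (q : ℕ) : Finset (ZMod (11 * q + 1)) :=
  insert ((11 * q : ℕ) : ZMod (11 * q + 1))
      ((Finset.range q).biUnion (fun i =>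
        ({((11 * i : ℕ) : ZMod (11 * q + 1)), ((11 * i + 1 : ℕ) : ZMod (11 * q + 1)),
          ((11 * i + 4 : ℕ) : ZMod (11 * q + 1)), ((11 * i + 5 : ℕ) : ZMod (11 * q + 1))} :
          Finset (ZMod (11 * q + 1)))))

lemma memC (q : ℕ) (hq : 1 ≤ q) (x : ZMod (11*q+1)) :
    x ∈ CC q ↔ (x.val % 11 = 0 ∨ x.val % 11 = 1 ∨ x.val % 11 = 4 ∨ x.val % 11 = 5) := by
  haveI : NeZero (11*q+1) := ⟨by omega⟩
  have hval : ∀ k : ℕ, k < 11*q+1 → ((x = ((k:ℕ) : ZMod (11*q+1))) ↔ x.val = k) := by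
    intro k hk
    constructor
    · intro h; rw [h, ZMod.val_cast_of_lt hk]
    · intro h; rw [← h]; exact (ZMod.natCast_rightInverse x).symm
  have ha := ZMod.val_lt x
  simp only [CC, Finset.mem_insert, Finset.mem_biUnion, Finset.mem_range, Finset.mem_singleton]
  constructor
  · rintro (h | ⟨i, hi, h|h|h|h⟩) <;> rw [hval _ (by omega)] at h <;> omega
  · intro h
    by_cases he : x.val = 11*q
    · left; rw [hval _ (by omega)]; exact he
    · right
      refine ⟨x.val / 11, by omega, ?_⟩
      rcases h with h|h|h|h
      · exact Or.inl (by rw [hval _ (by omega)]; omega)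
      · exact Or.inr (Or.inl (by rw [hval _ (by omega)]; omega))
      · exact Or.inr (Or.inr (Or.inl (by rw [hval _ (by omega)]; omega)))
      · exact Or.inr (Or.inr (Or.inr (by rw [hval _ (by omega)]; omega)))

lemma cast_eq_iff (n : ℕ) (hn : 23 ≤ n) (s e : ℤ) (hs1 : -15 ≤ s) (hs2 : s ≤ 15)
    (he1 : -3 ≤ e) (he2 : e ≤ 3) : ((s : ZMod n) = (e : ZMod n)) ↔ s = e := by
  constructor
  · intro h
    have h0 : ((s - e : ℤ) : ZMod n) = 0 := by push_cast; rw [h]; ring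
    rw [ZMod.intCast_zmod_eq_zero_iff_dvd] at h0
    have := Int.eq_zero_of_dvd_of_natAbs_lt_natAbs h0 (by omega)
    omega
  · rintro rfl; rfl

lemma mem_nbhd_shift (n : ℕ) (hn : 23 ≤ n) (v : ZMod n) (s : ℤ) (hs1 : -15 ≤ s) (hs2 : s ≤ 15) :
    (v + (s : ZMod n)) ∈ nbhd v ↔ (s = -3 ∨ s = -1 ∨ s = 0 ∨ s = 1 ∨ s = 3) := by
  have key : ∀ e : ℤ, -3 ≤ e → e ≤ 3 → (((s : ZMod n)) = (e : ZMod n) ↔ s = e) :=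
    fun e he1 he2 => cast_eq_iff n hn s e hs1 hs2 he1 he2
  simp only [nbhd, Finset.mem_insert, Finset.mem_singleton]
  constructor
  · rintro (h|h|h|h|h)
    · exact Or.inl ((key (-3) (by norm_num) (by norm_num)).mp
        (by push_cast; linear_combination h))
    · exact Or.inr (Or.inl ((key (-1) (by norm_num) (by norm_num)).mp
        (by push_cast; linear_combination h)))
    · exact Or.inr (Or.inr (Or.inl ((key 0 (by norm_num) (by norm_num)).mp
        (by push_cast; linear_combination h))))
    · exact Or.inr (Or.inr (Or.inr (Or.inl ((key 1 (by norm_num) (by norm_num)).mp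
        (by push_cast; linear_combination h)))))
    · exact Or.inr (Or.inr (Or.inr (Or.inr ((key 3 (by norm_num) (by norm_num)).mp
        (by push_cast; linear_combination h)))))
  · rintro (rfl|rfl|rfl|rfl|rfl)
    · exact Or.inl (by push_cast; ring)
    · exact Or.inr (Or.inl (by push_cast; ring))
    · exact Or.inr (Or.inr (Or.inl (by push_cast; ring)))
    · exact Or.inr (Or.inr (Or.inr (Or.inl (by push_cast; ring))))
    · exact Or.inr (Or.inr (Or.inr (Or.inr (by push_cast; ring))))

lemma shift_mem_C (q : ℕ) (hq : 2 ≤ q) (u : ZMod (11*q+1)) (t : ℤ)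
    (ht1 : -9 ≤ t) (ht2 : t ≤ 9) (hb : bitB (tfer (11*q+1) u.val) t = true) :
    (u + (t : ZMod (11*q+1))) ∈ CC q := by
  haveI : NeZero (11*q+1) := ⟨by omega⟩
  have hu : ((u.val : ℤ) : ZMod (11*q+1)) = u := by
    rw [Int.cast_natCast]; exact ZMod.natCast_rightInverse u
  have hw : u + (t : ZMod (11*q+1)) = (((u.val:ℤ) + t : ℤ) : ZMod (11*q+1)) := by
    rw [Int.cast_add, hu]
  have hv : ((u + (t : ZMod (11*q+1))).val : ℤ) = ((u.val:ℤ) + t) % (11*(q:ℤ)+1) := by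
    rw [hw, ZMod.val_intCast]; norm_num
  have hint := (bridge q u.val hq (ZMod.val_lt u) t ht1 ht2).mp hb
  rw [memC q (by omega)]
  omega

theorem Cq_union_identifying_mod1 (q : ℕ) (hq : 1 ≤ q) :
    IsIdentifying (insert ((11 * q : ℕ) : ZMod (11 * q + 1))
      ((Finset.range q).biUnion (fun i =>
        ({((11 * i : ℕ) : ZMod (11 * q + 1)), ((11 * i + 1 : ℕ) : ZMod (11 * q + 1)),
          ((11 * i + 4 : ℕ) : ZMod (11 * q + 1)), ((11 * i + 5 : ℕ) : ZMod (11 * q + 1))} :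
          Finset (ZMod (11 * q + 1)))))) := by
  show IsIdentifying (CC q)
  rcases eq_or_lt_of_le hq with hq1 | hq2
  · -- q = 1 : finite check
    subst hq1
    unfold IsIdentifying iset nbhd CC
    decide
  · have hq2' : 2 ≤ q := hq2
    have hn23 : (23 : ℕ) ≤ 11*q+1 := by omega
    have part1 : ∀ u : ZMod (11*q+1), (iset (CC q) u).Nonempty := by
      intro u
      obtain ⟨t, htmem, hbit⟩ := core1 (tfer (11*q+1) u.val) (tfer_lt _ _ (ZMod.val_lt u))
      have htE : t = -3 ∨ t = -1 ∨ t = 0 ∨ t = 1 ∨ t = 3 := by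
        simpa using htmem
      refine ⟨u + (t : ZMod (11*q+1)), ?_⟩
      rw [iset, Finset.mem_inter]
      exact ⟨(mem_nbhd_shift _ hn23 u t (by omega) (by omega)).mpr (by omega),
        shift_mem_C q hq2' u t (by omega) (by omega) hbit⟩
    refine ⟨part1, ?_⟩
    intro u v huv heq
    obtain ⟨c, hc⟩ := part1 u
    have hc2 : c ∈ iset (CC q) v := heq ▸ hc
    rw [iset, Finset.mem_inter] at hc hc2
    have hex : ∀ (x : ZMod (11*q+1)), c ∈ nbhd x →
        ∃ e : ℤ, (e = -3 ∨ e = -1 ∨ e = 0 ∨ e = 1 ∨ e = 3) ∧ c = x + (e : ZMod (11*q+1)) := by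
      intro x hx
      simp only [nbhd, Finset.mem_insert, Finset.mem_singleton] at hx
      rcases hx with h|h|h|h|h
      · exact ⟨-3, by norm_num, by rw [h]; push_cast; ring⟩
      · exact ⟨-1, by norm_num, by rw [h]; push_cast; ring⟩
      · exact ⟨0, by norm_num, by rw [h]; push_cast; ring⟩
      · exact ⟨1, by norm_num, by rw [h]; push_cast; ring⟩
      · exact ⟨3, by norm_num, by rw [h]; push_cast; ring⟩
    obtain ⟨e1, he1, hce1⟩ := hex u hc.1
    obtain ⟨e2, he2, hce2⟩ := hex v hc2.1
    have hveq : v = u + ((e1 - e2 : ℤ) : ZMod (11*q+1)) := by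
      have h12 : u + (e1 : ZMod (11*q+1)) = v + (e2 : ZMod (11*q+1)) := hce1.symm.trans hce2
      push_cast
      linear_combination -h12
    have hdne : e1 - e2 ≠ 0 := by
      intro h
      apply huv
      rw [hveq, h]
      push_cast
      ring
    have hdD : e1-e2 = -6 ∨ e1-e2 = -4 ∨ e1-e2 = -3 ∨ e1-e2 = -2 ∨ e1-e2 = -1 ∨
        e1-e2 = 1 ∨ e1-e2 = 2 ∨ e1-e2 = 3 ∨ e1-e2 = 4 ∨ e1-e2 = 6 := by omega
    have hdmem : e1 - e2 ∈ Dlist := by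
      rcases hdD with h|h|h|h|h|h|h|h|h|h <;> simp [h, Dlist]
    obtain ⟨t, htmem, hxor, hbit⟩ :=
      core2 (tfer (11*q+1) u.val) (tfer_lt _ _ (ZMod.val_lt u)) (e1 - e2) hdmem
    have htb : -9 ≤ t ∧ t ≤ 9 := by
      simp only [Tlist, List.mem_cons, List.not_mem_nil, or_false] at htmem
      omega
    have hw1 : (u + (t : ZMod (11*q+1))) ∈ nbhd u ↔
        (t = -3 ∨ t = -1 ∨ t = 0 ∨ t = 1 ∨ t = 3) :=
      mem_nbhd_shift _ hn23 u t (by omega) (by omega)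
    have hw2 : (u + (t : ZMod (11*q+1))) ∈ nbhd v ↔
        (t - (e1-e2) = -3 ∨ t - (e1-e2) = -1 ∨ t - (e1-e2) = 0 ∨ t - (e1-e2) = 1 ∨ t - (e1-e2) = 3) := by
      have hwv : u + (t : ZMod (11*q+1)) = v + ((t - (e1-e2) : ℤ) : ZMod (11*q+1)) := by
        rw [hveq]; push_cast; ring
      rw [hwv]
      exact mem_nbhd_shift _ hn23 v (t - (e1-e2)) (by omega) (by omega)
    have hwC : (u + (t : ZMod (11*q+1))) ∈ CC q :=
      shift_mem_C q hq2' u t (by omega) (by omega) hbit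
    have hiff : (u + (t : ZMod (11*q+1))) ∈ iset (CC q) u ↔
        (u + (t : ZMod (11*q+1))) ∈ iset (CC q) v := by rw [heq]
    rw [iset, Finset.mem_inter, iset, Finset.mem_inter] at hiff
    have hEt : ∀ s : ℤ, (eE s = true) ↔ (s = -3 ∨ s = -1 ∨ s = 0 ∨ s = 1 ∨ s = 3) := by
      intro s; simp only [eE, Bool.or_eq_true, beq_iff_eq]; omega
    by_cases h1 : eE t = true
    · have h2 : ¬ (eE (t - (e1-e2)) = true) := fun h => hxor (h1.trans h.symm)
      have hmem : (u + (t : ZMod (11*q+1))) ∈ nbhd v :=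
        (hiff.mp ⟨hw1.mpr ((hEt t).mp h1), hwC⟩).1
      exact h2 ((hEt _).mpr (hw2.mp hmem))
    · have h2 : eE (t - (e1-e2)) = true := by
        have h1' : eE t = false := by rwa [Bool.not_eq_true] at h1
        rcases Bool.eq_false_or_eq_true (eE (t - (e1-e2))) with h | h
        · exact h
        · exact absurd (h1'.trans h.symm) hxor
      have hmem : (u + (t : ZMod (11*q+1))) ∈ nbhd u :=
        (hiff.mpr ⟨hw2.mpr ((hEt _).mp h2), hwC⟩).1
      exact h1 ((hEt t).mpr (hw1.mp hmem))
end

section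
/- For every integer q ≥ 1, the set C_q ∪ {11q, 11q+1, 11q+3} is an identifying code in the circulant graph C_{11q+7}(1,3), where C_q = {11i+j : 0 ≤ i ≤ q−1, j ∈ {0,1,4,5}}. -/
namespace CqAux

def fb (z : ℤ) : Bool :=
  if 0 ≤ z ∧ z < 7 then decide (z = 0 ∨ z = 1 ∨ z = 3)
  else if 7 ≤ z then
    decide ((z-7) % 11 = 0 ∨ (z-7) % 11 = 1 ∨ (z-7) % 11 = 4 ∨ (z-7) % 11 = 5)
  else decide (z % 11 = 0 ∨ z % 11 = 1 ∨ z % 11 = 4 ∨ z % 11 = 5)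

def inS (o : ℤ) : Bool := decide (o = -3 ∨ o = -1 ∨ o = 0 ∨ o = 1 ∨ o = 3)

def Np (z : ℤ) : Bool := fb (z + -3) || fb (z + -1) || fb (z + 0) || fb (z + 1) || fb (z + 3)

def Dp (z d : ℤ) : Bool :=
  (fb (z + -3) && !inS (-3 - d)) || (fb (z + -1) && !inS (-1 - d)) ||
  (fb (z + 0) && !inS (0 - d)) || (fb (z + 1) && !inS (1 - d)) ||
  (fb (z + 3) && !inS (3 - d)) ||
  (fb (z + d + -3) && !inS (-3 + d)) || (fb (z + d + -1) && !inS (-1 + d)) ||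
  (fb (z + d + 0) && !inS (0 + d)) || (fb (z + d + 1) && !inS (1 + d)) ||
  (fb (z + d + 3) && !inS (3 + d))

lemma check : ∀ (k : ℕ), k < 28 → ∀ (j : ℕ), j < 6 →
    Np ((k:ℤ) - 21) = true ∧ Dp ((k:ℤ) - 21) ((j:ℤ) + 1) = true := by decide

lemma fb_congr (a b : ℤ) (ha : a < 0) (hb : b < 0) (h : a % 11 = b % 11) : fb a = fb b := by
  unfold fb
  rw [if_neg (by omega), if_neg (by omega), if_neg (by omega), if_neg (by omega), h]

lemma Np_shift (z : ℤ) (hz : z < -21) : Np z = Np (z + 11) := by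
  unfold Np
  rw [fb_congr (z + -3) (z + 11 + -3) (by omega) (by omega) (by omega),
    fb_congr (z + -1) (z + 11 + -1) (by omega) (by omega) (by omega),
    fb_congr (z + 0) (z + 11 + 0) (by omega) (by omega) (by omega),
    fb_congr (z + 1) (z + 11 + 1) (by omega) (by omega) (by omega),
    fb_congr (z + 3) (z + 11 + 3) (by omega) (by omega) (by omega)]

lemma Dp_shift (z d : ℤ) (hz : z < -21) (hd1 : 1 ≤ d) (hd2 : d ≤ 6) :
    Dp z d = Dp (z + 11) d := by
  unfold Dp
  rw [fb_congr (z + -3) (z + 11 + -3) (by omega) (by omega) (by omega),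
    fb_congr (z + -1) (z + 11 + -1) (by omega) (by omega) (by omega),
    fb_congr (z + 0) (z + 11 + 0) (by omega) (by omega) (by omega),
    fb_congr (z + 1) (z + 11 + 1) (by omega) (by omega) (by omega),
    fb_congr (z + 3) (z + 11 + 3) (by omega) (by omega) (by omega),
    fb_congr (z + d + -3) (z + 11 + d + -3) (by omega) (by omega) (by omega),
    fb_congr (z + d + -1) (z + 11 + d + -1) (by omega) (by omega) (by omega),
    fb_congr (z + d + 0) (z + 11 + d + 0) (by omega) (by omega) (by omega),
    fb_congr (z + d + 1) (z + 11 + d + 1) (by omega) (by omega) (by omega),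
    fb_congr (z + d + 3) (z + 11 + d + 3) (by omega) (by omega) (by omega)]

lemma base (z : ℤ) (h1 : -21 ≤ z) (h2 : z ≤ 6) :
    Np z = true ∧ ∀ d : ℤ, 1 ≤ d → d ≤ 6 → Dp z d = true := by
  have hk : ((z + 21).toNat : ℤ) = z + 21 := Int.toNat_of_nonneg (by omega)
  constructor
  · have := (check (z + 21).toNat (by omega) 0 (by norm_num)).1
    rwa [show ((z+21).toNat : ℤ) - 21 = z by omega] at this
  · intro d hd1 hd2
    have hj : ((d - 1).toNat : ℤ) = d - 1 := Int.toNat_of_nonneg (by omega)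
    have := (check (z + 21).toNat (by omega) (d - 1).toNat (by omega)).2
    rwa [show ((z+21).toNat : ℤ) - 21 = z by omega,
      show ((d-1).toNat : ℤ) + 1 = d by omega] at this

lemma Nall : ∀ (m : ℕ) (z : ℤ), -21 - m ≤ z → z ≤ 6 → Np z = true ∧
    ∀ d : ℤ, 1 ≤ d → d ≤ 6 → Dp z d = true := by
  intro m
  induction m with
  | zero => intro z h1 h2; exact base z (by omega) h2
  | succ m ih =>
    intro z h1 h2
    by_cases hz : -21 ≤ z
    · exact base z hz h2
    · constructor
      · rw [Np_shift z (by omega)]; exact (ih (z+11) (by omega) (by omega)).1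
      · intro d hd1 hd2
        rw [Dp_shift z d (by omega) hd1 hd2]
        exact (ih (z+11) (by omega) (by omega)).2 d hd1 hd2

lemma Nall' (z : ℤ) (h2 : z ≤ 6) : Np z = true ∧
    ∀ d : ℤ, 1 ≤ d → d ≤ 6 → Dp z d = true := by
  rcases le_or_gt (-21) z with h | h
  · exact base z h h2
  · exact Nall (-21 - z).toNat z (by omega) h2



def Code (q : ℕ) : Finset (ZMod (11 * q + 7)) :=
  ({((11 * q : ℕ) : ZMod (11 * q + 7)), ((11 * q + 1 : ℕ) : ZMod (11 * q + 7)),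
      ((11 * q + 3 : ℕ) : ZMod (11 * q + 7))} : Finset (ZMod (11 * q + 7))) ∪
    ((Finset.range q).biUnion (fun i =>
      ({((11 * i : ℕ) : ZMod (11 * q + 7)), ((11 * i + 1 : ℕ) : ZMod (11 * q + 7)),
        ((11 * i + 4 : ℕ) : ZMod (11 * q + 7)), ((11 * i + 5 : ℕ) : ZMod (11 * q + 7))} :
        Finset (ZMod (11 * q + 7)))))

lemma castinj {n : ℕ} [NeZero n] {a b : ℕ} (ha : a < n) (hb : b < n)
    (h : (a : ZMod n) = b) : a = b := by
  have := congrArg ZMod.val h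
  rwa [ZMod.val_cast_of_lt ha, ZMod.val_cast_of_lt hb] at this

lemma mem_code_nat (q : ℕ) (hq : 1 ≤ q) (y : ℕ) (hy : y < 11 * q + 7) :
    ((y : ZMod (11 * q + 7)) ∈ Code q) ↔
      ((y % 11 = 0 ∨ y % 11 = 1 ∨ y % 11 = 4 ∨ y % 11 = 5) ∧ y < 11 * q) ∨
        y = 11 * q ∨ y = 11 * q + 1 ∨ y = 11 * q + 3 := by
  haveI : NeZero (11 * q + 7) := ⟨by omega⟩
  simp only [Code, Finset.mem_union, Finset.mem_insert, Finset.mem_singleton,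
    Finset.mem_biUnion, Finset.mem_range]
  constructor
  · rintro ((h | h | h) | ⟨i, hi, (h | h | h | h)⟩)
    · right; left; exact castinj hy (by omega) h
    · right; right; left; exact castinj hy (by omega) h
    · right; right; right; exact castinj hy (by omega) h
    all_goals
      left
      have := castinj hy (by omega) h
      omega
  · rintro (⟨hr, hlt⟩ | h | h | h)
    · right
      refine ⟨y / 11, by omega, ?_⟩
      rcases hr with h | h | h | h
      · left; congr 1; omega
      · right; left; congr 1; omega
      · right; right; left; congr 1; omega
      · right; right; right; congr 1; omega
    · left; left; congr 1
    · left; right; left; congr 1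
    · left; right; right; congr 1

lemma castshift {n : ℕ} (a b : ℤ) (h : (n : ℤ) ∣ (a - b)) :
    ((a : ZMod n) = (b : ZMod n)) := by
  have h2 : (((a - b) : ℤ) : ZMod n) = 0 := (ZMod.intCast_zmod_eq_zero_iff_dvd _ n).2 h
  push_cast at h2
  rwa [sub_eq_zero] at h2

lemma mem_code_int (q : ℕ) (hq : 1 ≤ q) (z : ℤ) (h1 : -(11 * (q:ℤ)) - 3 ≤ z)
    (h2 : z < 11 * (q:ℤ) + 7) :
    (((11 * (q:ℤ) + z : ℤ) : ZMod (11 * q + 7)) ∈ Code q) ↔ fb z = true := by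
  rcases le_or_gt 7 z with hA | hA
  · -- wraps forward: position z - 7
    set y := (z - 7).toNat with hy
    have hyz : (y : ℤ) = z - 7 := Int.toNat_of_nonneg (by omega)
    have hcast : ((11 * (q:ℤ) + z : ℤ) : ZMod (11 * q + 7)) = ((y : ℕ) : ZMod (11 * q + 7)) := by
      rw [show ((y : ℕ) : ZMod (11 * q + 7)) = (((y:ℕ) : ℤ) : ZMod (11 * q + 7)) by push_cast; rfl]
      exact castshift _ _ ⟨1, by push_cast [hyz]; ring⟩
    rw [hcast, mem_code_nat q hq y (by omega)]
    unfold fb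
    rw [if_neg (by omega), if_pos (by omega)]
    simp only [decide_eq_true_eq]
    omega
  rcases le_or_gt 0 z with hB | hB
  · set y := (11 * (q:ℤ) + z).toNat with hy
    have hyz : (y : ℤ) = 11 * q + z := Int.toNat_of_nonneg (by omega)
    have hcast : ((11 * (q:ℤ) + z : ℤ) : ZMod (11 * q + 7)) = ((y : ℕ) : ZMod (11 * q + 7)) := by
      rw [show ((y : ℕ) : ZMod (11 * q + 7)) = (((y:ℕ) : ℤ) : ZMod (11 * q + 7)) by push_cast; rfl]
      exact castshift _ _ ⟨0, by push_cast [hyz]; ring⟩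
    rw [hcast, mem_code_nat q hq y (by omega)]
    unfold fb
    rw [if_pos (by omega)]
    simp only [decide_eq_true_eq]
    omega
  rcases le_or_gt (-(11 * (q:ℤ))) z with hC | hC
  · set y := (11 * (q:ℤ) + z).toNat with hy
    have hyz : (y : ℤ) = 11 * q + z := Int.toNat_of_nonneg (by omega)
    have hcast : ((11 * (q:ℤ) + z : ℤ) : ZMod (11 * q + 7)) = ((y : ℕ) : ZMod (11 * q + 7)) := by
      rw [show ((y : ℕ) : ZMod (11 * q + 7)) = (((y:ℕ) : ℤ) : ZMod (11 * q + 7)) by push_cast; rfl]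
      exact castshift _ _ ⟨0, by push_cast [hyz]; ring⟩
    rw [hcast, mem_code_nat q hq y (by omega)]
    unfold fb
    rw [if_neg (by omega), if_neg (by omega)]
    simp only [decide_eq_true_eq]
    omega
  · set y := (22 * (q:ℤ) + 7 + z).toNat with hy
    have hyz : (y : ℤ) = 22 * q + 7 + z := Int.toNat_of_nonneg (by omega)
    have hcast : ((11 * (q:ℤ) + z : ℤ) : ZMod (11 * q + 7)) = ((y : ℕ) : ZMod (11 * q + 7)) := by
      rw [show ((y : ℕ) : ZMod (11 * q + 7)) = (((y:ℕ) : ℤ) : ZMod (11 * q + 7)) by push_cast; rfl]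
      exact castshift _ _ ⟨-1, by push_cast [hyz]; ring⟩
    rw [hcast, mem_code_nat q hq y (by omega)]
    unfold fb
    rw [if_neg (by omega), if_neg (by omega)]
    simp only [decide_eq_true_eq]
    omega

lemma mem_nbhd_iff {n : ℕ} (c v : ZMod n) : c ∈ nbhd v ↔
    ∃ o : ℤ, (o = -3 ∨ o = -1 ∨ o = 0 ∨ o = 1 ∨ o = 3) ∧ c = v + (o : ZMod n) := by
  simp only [nbhd, Finset.mem_insert, Finset.mem_singleton]
  constructor
  · rintro (h | h | h | h | h)
    · exact ⟨-3, by norm_num, by rw [h]; push_cast; ring⟩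
    · exact ⟨-1, by norm_num, by rw [h]; push_cast; ring⟩
    · exact ⟨0, by norm_num, by rw [h]; push_cast; ring⟩
    · exact ⟨1, by norm_num, by rw [h]; push_cast; ring⟩
    · exact ⟨3, by norm_num, by rw [h]; push_cast; ring⟩
  · rintro ⟨o, (rfl | rfl | rfl | rfl | rfl), rfl⟩
    · left; push_cast; ring
    · right; left; push_cast; ring
    · right; right; left; push_cast; ring
    · right; right; right; left; push_cast; ring
    · right; right; right; right; push_cast; ring

lemma code_elem (q : ℕ) (hq : 1 ≤ q) (w : ZMod (11 * q + 7)) (z o : ℤ)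
    (hw : w = ((11 * (q:ℤ) + z : ℤ) : ZMod (11 * q + 7)))
    (hb1 : -(11 * (q:ℤ)) - 3 ≤ z + o) (hb2 : z + o < 11 * (q:ℤ) + 7)
    (hf : fb (z + o) = true) (ho : o = -3 ∨ o = -1 ∨ o = 0 ∨ o = 1 ∨ o = 3) :
    (((11 * (q:ℤ) + (z + o) : ℤ) : ZMod (11 * q + 7)) ∈ iset (Code q) w) := by
  rw [iset, Finset.mem_inter]
  refine ⟨(mem_nbhd_iff _ _).2 ⟨o, ho, by rw [hw]; push_cast; ring⟩,
    (mem_code_int q hq (z + o) hb1 hb2).2 hf⟩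

lemma cancel (q : ℕ) (hq : 1 ≤ q) {a b : ℤ}
    (h : ((a : ℤ) : ZMod (11 * q + 7)) = ((b : ℤ) : ZMod (11 * q + 7)))
    (hs1 : a - b < 11 * (q:ℤ) + 7) (hs2 : -(11 * (q:ℤ)) - 7 < a - b) : a = b := by
  have h2 : (((a - b) : ℤ) : ZMod (11 * q + 7)) = 0 := by push_cast [h]; ring
  have h3 := (ZMod.intCast_zmod_eq_zero_iff_dvd _ _).1 h2
  have h4 := Int.eq_zero_of_abs_lt_dvd h3 (abs_lt.2 ⟨by push_cast; omega, by push_cast; omega⟩)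
  omega

lemma keyA (q : ℕ) (hq : 1 ≤ q) (w : ZMod (11 * q + 7)) (z d o : ℤ)
    (hw : w = ((11 * (q:ℤ) + z : ℤ) : ZMod (11 * q + 7)))
    (hz1 : -(11 * (q:ℤ)) ≤ z) (hz6 : z ≤ 6) (hd1 : 1 ≤ d) (hd2 : d ≤ 6)
    (ho : o = -3 ∨ o = -1 ∨ o = 0 ∨ o = 1 ∨ o = 3)
    (hf : fb (z + o) = true) (hs : inS (o - d) = false)
    (H : iset (Code q) w = iset (Code q) (w + ((d : ℤ) : ZMod (11 * q + 7)))) : False := by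
  have hc := code_elem q hq w z o hw (by omega) (by omega) hf ho
  rw [H] at hc
  obtain ⟨o', ho', hco⟩ := (mem_nbhd_iff _ _).1 (Finset.mem_inter.1 hc).1
  rw [hw] at hco
  have heq : ((11 * (q:ℤ) + (z + o) : ℤ) : ZMod (11 * q + 7)) =
      ((11 * (q:ℤ) + z + d + o' : ℤ) : ZMod (11 * q + 7)) := by
    rw [hco]; push_cast; ring
  have hee := cancel q hq heq (by omega) (by omega)
  simp only [inS, decide_eq_false_iff_not] at hs
  omega

lemma keyB (q : ℕ) (hq : 1 ≤ q) (w : ZMod (11 * q + 7)) (z d o : ℤ)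
    (hw : w = ((11 * (q:ℤ) + z : ℤ) : ZMod (11 * q + 7)))
    (hz1 : -(11 * (q:ℤ)) ≤ z) (hz6 : z ≤ 6) (hd1 : 1 ≤ d) (hd2 : d ≤ 6)
    (ho : o = -3 ∨ o = -1 ∨ o = 0 ∨ o = 1 ∨ o = 3)
    (hf : fb (z + d + o) = true) (hs : inS (o + d) = false)
    (H : iset (Code q) w = iset (Code q) (w + ((d : ℤ) : ZMod (11 * q + 7)))) : False := by
  have hw' : w + ((d : ℤ) : ZMod (11 * q + 7)) =
      ((11 * (q:ℤ) + (z + d) : ℤ) : ZMod (11 * q + 7)) := by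
    rw [hw]; push_cast; ring
  have hc := code_elem q hq _ (z + d) o hw' (by omega) (by omega) hf ho
  rw [← H] at hc
  obtain ⟨o', ho', hco⟩ := (mem_nbhd_iff _ _).1 (Finset.mem_inter.1 hc).1
  rw [hw] at hco
  have heq : ((11 * (q:ℤ) + (z + d + o) : ℤ) : ZMod (11 * q + 7)) =
      ((11 * (q:ℤ) + z + o' : ℤ) : ZMod (11 * q + 7)) := by
    rw [hco]; push_cast; ring
  have hee := cancel q hq heq (by omega) (by omega)
  simp only [inS, decide_eq_false_iff_not] at hs
  omega

lemma setup (q : ℕ) (hq : 1 ≤ q) (w : ZMod (11 * q + 7)) :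
    ∃ z : ℤ, w = ((11 * (q:ℤ) + z : ℤ) : ZMod (11 * q + 7)) ∧
      -(11 * (q:ℤ)) ≤ z ∧ z ≤ 6 := by
  haveI : NeZero (11 * q + 7) := ⟨by omega⟩
  refine ⟨(w.val : ℤ) - 11 * q, ?_, by omega, ?_⟩
  · rw [show (11 * (q:ℤ) + ((w.val : ℤ) - 11 * q)) = (w.val : ℤ) by ring]
    exact_mod_cast (ZMod.natCast_rightInverse w).symm
  · have := ZMod.val_lt w
    omega

lemma key (q : ℕ) (hq : 1 ≤ q) (w : ZMod (11 * q + 7)) (d : ℤ) (hd1 : 1 ≤ d) (hd2 : d ≤ 6)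
    (H : iset (Code q) w = iset (Code q) (w + ((d : ℤ) : ZMod (11 * q + 7)))) : False := by
  obtain ⟨z, hw, hz1, hz6⟩ := setup q hq w
  have hD := (Nall' z hz6).2 d hd1 hd2
  simp only [Dp, Bool.or_eq_true, Bool.and_eq_true, Bool.not_eq_true'] at hD
  rcases hD with (((((((((⟨hf, hs⟩ | ⟨hf, hs⟩) | ⟨hf, hs⟩) | ⟨hf, hs⟩) | ⟨hf, hs⟩) |
    ⟨hf, hs⟩) | ⟨hf, hs⟩) | ⟨hf, hs⟩) | ⟨hf, hs⟩) | ⟨hf, hs⟩)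
  · exact keyA q hq w z d (-3) hw hz1 hz6 hd1 hd2 (by norm_num) hf hs H
  · exact keyA q hq w z d (-1) hw hz1 hz6 hd1 hd2 (by norm_num) hf hs H
  · exact keyA q hq w z d 0 hw hz1 hz6 hd1 hd2 (by norm_num) hf hs H
  · exact keyA q hq w z d 1 hw hz1 hz6 hd1 hd2 (by norm_num) hf hs H
  · exact keyA q hq w z d 3 hw hz1 hz6 hd1 hd2 (by norm_num) hf hs H
  · exact keyB q hq w z d (-3) hw hz1 hz6 hd1 hd2 (by norm_num) hf hs H
  · exact keyB q hq w z d (-1) hw hz1 hz6 hd1 hd2 (by norm_num) hf hs H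
  · exact keyB q hq w z d 0 hw hz1 hz6 hd1 hd2 (by norm_num) hf hs H
  · exact keyB q hq w z d 1 hw hz1 hz6 hd1 hd2 (by norm_num) hf hs H
  · exact keyB q hq w z d 3 hw hz1 hz6 hd1 hd2 (by norm_num) hf hs H

lemma dom (q : ℕ) (hq : 1 ≤ q) (u : ZMod (11 * q + 7)) : (iset (Code q) u).Nonempty := by
  obtain ⟨z, hw, hz1, hz6⟩ := setup q hq u
  have hN := (Nall' z hz6).1
  simp only [Np, Bool.or_eq_true] at hN
  rcases hN with ((((h | h) | h) | h) | h)
  · exact ⟨_, code_elem q hq u z (-3) hw (by omega) (by omega) h (by norm_num)⟩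
  · exact ⟨_, code_elem q hq u z (-1) hw (by omega) (by omega) h (by norm_num)⟩
  · exact ⟨_, code_elem q hq u z 0 hw (by omega) (by omega) h (by norm_num)⟩
  · exact ⟨_, code_elem q hq u z 1 hw (by omega) (by omega) h (by norm_num)⟩
  · exact ⟨_, code_elem q hq u z 3 hw (by omega) (by omega) h (by norm_num)⟩

lemma distinct (q : ℕ) (hq : 1 ≤ q) (u v : ZMod (11 * q + 7)) (huv : u ≠ v)
    (H : iset (Code q) u = iset (Code q) v) : False := by
  obtain ⟨c, hc⟩ := dom q hq u
  have hcu := (Finset.mem_inter.1 hc).1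
  have hc' := hc
  rw [H] at hc'
  have hcv := (Finset.mem_inter.1 hc').1
  obtain ⟨o1, ho1, rfl⟩ := (mem_nbhd_iff c u).1 hcu
  obtain ⟨o2, ho2, h2⟩ := (mem_nbhd_iff _ v).1 hcv
  have hv : v = u + ((o1 - o2 : ℤ) : ZMod (11 * q + 7)) := by
    push_cast
    linear_combination -h2
  have he : o1 - o2 ≠ 0 := by
    intro h0
    apply huv
    rw [hv, h0]
    push_cast
    ring
  rcases lt_or_gt_of_ne he with hneg | hpos
  · have hu : u = v + ((-(o1 - o2) : ℤ) : ZMod (11 * q + 7)) := by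
      rw [hv]; push_cast; ring
    rw [hu] at H
    exact key q hq v (-(o1 - o2)) (by omega) (by omega) H.symm
  · rw [hv] at H
    exact key q hq u (o1 - o2) (by omega) (by omega) H

end CqAux

theorem Cq_union_identifying_mod7 (q : ℕ) (hq : 1 ≤ q) :
    IsIdentifying (({((11 * q : ℕ) : ZMod (11 * q + 7)), ((11 * q + 1 : ℕ) : ZMod (11 * q + 7)),
        ((11 * q + 3 : ℕ) : ZMod (11 * q + 7))} : Finset (ZMod (11 * q + 7))) ∪
      ((Finset.range q).biUnion (fun i =>
        ({((11 * i : ℕ) : ZMod (11 * q + 7)), ((11 * i + 1 : ℕ) : ZMod (11 * q + 7)),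
          ((11 * i + 4 : ℕ) : ZMod (11 * q + 7)), ((11 * i + 5 : ℕ) : ZMod (11 * q + 7))} :
          Finset (ZMod (11 * q + 7)))))) := by
  exact ⟨fun u => CqAux.dom q hq u, fun u v huv H => CqAux.distinct q hq u v huv H⟩
end

section
/- The set B_q = {11i+j : 0 ≤ i ≤ q−1, j ∈ {0,4,5,6}} is NOT an identifying code in C_{11q}(1,3) for any q ≥ 1; specifically, I(B_q; 0) = I(B_q; 11q−1) = {0}. -/
theorem Bq_not_identifying (q : ℕ) (hq : 1 ≤ q)
    (B : Finset (ZMod (11 * q)))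
    (hB : B = (Finset.range q).biUnion (fun i =>
      ({((11 * i : ℕ) : ZMod (11 * q)), ((11 * i + 4 : ℕ) : ZMod (11 * q)),
        ((11 * i + 5 : ℕ) : ZMod (11 * q)), ((11 * i + 6 : ℕ) : ZMod (11 * q))} :
        Finset (ZMod (11 * q))))) :
    ¬ IsIdentifying B ∧ iset B 0 = {0} ∧
      iset B ((11 * q - 1 : ℕ) : ZMod (11 * q)) = {0} := by
  haveI : Fact (1 < 11 * q) := ⟨by omega⟩
  haveI : NeZero (11 * q) := ⟨by omega⟩
  have hval : ∀ x : ZMod (11*q), x ∈ B ↔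
      (x.val % 11 = 0 ∨ x.val % 11 = 4 ∨ x.val % 11 = 5 ∨ x.val % 11 = 6) := by
    intro x
    subst hB
    simp only [Finset.mem_biUnion, Finset.mem_range, Finset.mem_insert, Finset.mem_singleton]
    constructor
    · rintro ⟨i, hi, h | h | h | h⟩ <;> subst h <;>
        rw [ZMod.val_cast_of_lt (by omega)] <;> omega
    · intro h
      have hx : ((x.val : ℕ) : ZMod (11*q)) = x := ZMod.natCast_zmod_val x
      have hlt : x.val < 11 * q := ZMod.val_lt x
      refine ⟨x.val / 11, by omega, ?_⟩
      rcases h with h | h | h | h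
      · left; rw [show 11 * (x.val / 11) = x.val from by omega]; exact hx.symm
      · right; left; rw [show 11 * (x.val / 11) + 4 = x.val from by omega]; exact hx.symm
      · right; right; left; rw [show 11 * (x.val / 11) + 5 = x.val from by omega]; exact hx.symm
      · right; right; right; rw [show 11 * (x.val / 11) + 6 = x.val from by omega]; exact hx.symm
  have hmem : ∀ m : ℕ, m < 11 * q →
      (((m : ℕ) : ZMod (11*q)) ∈ B ↔ (m % 11 = 0 ∨ m % 11 = 4 ∨ m % 11 = 5 ∨ m % 11 = 6)) := by
    intro m hm
    rw [hval, ZMod.val_cast_of_lt hm]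
  have castneg : ∀ k : ℕ, k ≤ 11 * q →
      (((11 * q - k : ℕ)) : ZMod (11*q)) = -(k : ℕ) := by
    intro k hk
    rw [Nat.cast_sub hk, ZMod.natCast_self, zero_sub]
  have hneg : ∀ k : ℕ, 0 < k → k ≤ 4 → (-((k : ℕ)) : ZMod (11*q)) ∉ B := by
    intro k h1 h2
    rw [← castneg k (by omega), hmem _ (by omega)]
    omega
  have hpos : ∀ k : ℕ, 0 < k → k ≤ 3 → (((k : ℕ)) : ZMod (11*q)) ∉ B := by
    intro k h1 h2
    rw [hmem _ (by omega)]
    omega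
  have h0B : (0 : ZMod (11*q)) ∈ B := by
    rw [show (0 : ZMod (11*q)) = ((0 : ℕ) : ZMod (11*q)) from by simp, hmem 0 (by omega)]
    omega
  have h0 : iset B 0 = {0} := by
    ext x
    simp only [iset, nbhd, Finset.mem_inter, Finset.mem_insert, Finset.mem_singleton]
    constructor
    · rintro ⟨h | h | h | h | h, hxB⟩ <;> subst h
      · exact absurd hxB (by have := hneg 3 (by omega) (by omega); rw [show (-((3:ℕ)) : ZMod (11*q)) = 0 - 3 from by push_cast; ring] at this; exact this)
      · exact absurd hxB (by have := hneg 1 (by omega) (by omega); rw [show (-((1:ℕ)) : ZMod (11*q)) = 0 - 1 from by push_cast; ring] at this; exact this)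
      · rfl
      · exact absurd hxB (by have := hpos 1 (by omega) (by omega); rw [show (((1:ℕ)) : ZMod (11*q)) = 0 + 1 from by push_cast; ring] at this; exact this)
      · exact absurd hxB (by have := hpos 3 (by omega) (by omega); rw [show (((3:ℕ)) : ZMod (11*q)) = 0 + 3 from by push_cast; ring] at this; exact this)
    · rintro rfl
      exact ⟨Or.inr (Or.inr (Or.inl rfl)), h0B⟩
  have hu : ((11 * q - 1 : ℕ) : ZMod (11 * q)) = -1 := by
    rw [castneg 1 (by omega)]; norm_num
  have h1 : iset B ((11 * q - 1 : ℕ) : ZMod (11 * q)) = {0} := by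
    rw [hu]
    ext x
    simp only [iset, nbhd, Finset.mem_inter, Finset.mem_insert, Finset.mem_singleton]
    constructor
    · rintro ⟨h | h | h | h | h, hxB⟩ <;> subst h
      · exact absurd hxB (by have := hneg 4 (by omega) (by omega); rw [show (-((4:ℕ)) : ZMod (11*q)) = -1 - 3 from by push_cast; ring] at this; exact this)
      · exact absurd hxB (by have := hneg 2 (by omega) (by omega); rw [show (-((2:ℕ)) : ZMod (11*q)) = -1 - 1 from by push_cast; ring] at this; exact this)
      · exact absurd hxB (by have := hneg 1 (by omega) (by omega); rw [show (-((1:ℕ)) : ZMod (11*q)) = -1 from by push_cast; ring] at this; exact this)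
      · rw [show (-1 + 1 : ZMod (11*q)) = 0 from by ring]
      · exact absurd hxB (by have := hpos 2 (by omega) (by omega); rw [show (((2:ℕ)) : ZMod (11*q)) = -1 + 3 from by push_cast; ring] at this; exact this)
    · rintro rfl
      refine ⟨Or.inr (Or.inr (Or.inr (Or.inl (by ring)))), h0B⟩
  have hne : (0 : ZMod (11*q)) ≠ ((11 * q - 1 : ℕ) : ZMod (11 * q)) := by
    rw [hu]
    intro h
    have h1' : (1 : ZMod (11*q)) = 0 := by
      rw [← neg_neg (1 : ZMod (11*q)), show (-1 : ZMod (11*q)) = 0 from h.symm, neg_zero]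
    exact one_ne_zero h1'
  refine ⟨?_, h0, h1⟩
  rintro ⟨-, h2⟩
  exact h2 0 _ hne (h0.trans h1.symm)
end

section
/- If C is an identifying code in C_n(1,3) (n ≥ 20) containing a 'pattern P', i.e., there is a vertex u with u+2, u+3 ∈ C and u, u+1, u+4, u+5, u+6, u+7, u+8 ∉ C, then the vertices u−2, u−1, u+9 and u+10 all belong to C. -/
theorem pattern_P_forces (n : ℕ) (hn : 20 ≤ n) (C : Finset (ZMod n))
    (hC : IsIdentifying C) (u : ZMod n)
    (h2 : u + 2 ∈ C) (h3 : u + 3 ∈ C)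
    (h0 : u ∉ C) (h1 : u + 1 ∉ C) (h4 : u + 4 ∉ C) (h5 : u + 5 ∉ C)
    (h6 : u + 6 ∉ C) (h7 : u + 7 ∉ C) (h8 : u + 8 ∉ C) :
    u - 2 ∈ C ∧ u - 1 ∈ C ∧ u + 9 ∈ C ∧ u + 10 ∈ C := by
  have hcast : ∀ a b : ℕ, a < n → b < n → a ≠ b → ((a : ZMod n) ≠ (b : ZMod n)) := by
    intro a b ha hb hab h
    apply hab
    have := congrArg ZMod.val h
    rwa [ZMod.val_natCast_of_lt ha, ZMod.val_natCast_of_lt hb] at this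
  -- distinctness facts
  have h46 : (u + 4 : ZMod n) ≠ u + 6 := by
    intro h
    exact hcast 4 6 (by omega) (by omega) (by omega) (by exact_mod_cast add_left_cancel h)
  have h15 : (u + 1 : ZMod n) ≠ u + 5 := by
    intro h
    exact hcast 1 5 (by omega) (by omega) (by omega) (by exact_mod_cast add_left_cancel h)
  have h23 : (u + 2 : ZMod n) ≠ u + 3 := by
    intro h
    exact hcast 2 3 (by omega) (by omega) (by omega) (by exact_mod_cast add_left_cancel h)
  -- u + 9 ∈ C
  have h9 : u + 9 ∈ C := by
    by_contra h9
    have e4 : iset C (u + 4) = {u + 3} := by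
      ext y
      simp only [iset, nbhd, Finset.mem_inter, Finset.mem_insert, Finset.mem_singleton]
      constructor
      · rintro ⟨(rfl | rfl | rfl | rfl | rfl), hc⟩
        · exact absurd ((show u + 4 - 3 = u + 1 by ring) ▸ hc) h1
        · show u + 4 - 1 = u + 3; ring
        · exact absurd hc h4
        · exact absurd ((show u + 4 + 1 = u + 5 by ring) ▸ hc) h5
        · exact absurd ((show u + 4 + 3 = u + 7 by ring) ▸ hc) h7
      · rintro rfl
        exact ⟨Or.inr (Or.inl (by ring)), h3⟩
    have e6 : iset C (u + 6) = {u + 3} := by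
      ext y
      simp only [iset, nbhd, Finset.mem_inter, Finset.mem_insert, Finset.mem_singleton]
      constructor
      · rintro ⟨(rfl | rfl | rfl | rfl | rfl), hc⟩
        · show u + 6 - 3 = u + 3; ring
        · exact absurd ((show u + 6 - 1 = u + 5 by ring) ▸ hc) h5
        · exact absurd hc h6
        · exact absurd ((show u + 6 + 1 = u + 7 by ring) ▸ hc) h7
        · exact absurd ((show u + 6 + 3 = u + 9 by ring) ▸ hc) h9
      · rintro rfl
        exact ⟨Or.inl (by ring), h3⟩
    exact hC.2 (u + 4) (u + 6) h46 (e4.trans e6.symm)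
  -- u - 2 ∈ C
  have hm2 : u - 2 ∈ C := by
    by_contra hm2
    have e1 : iset C (u + 1) = {u + 2} := by
      ext y
      simp only [iset, nbhd, Finset.mem_inter, Finset.mem_insert, Finset.mem_singleton]
      constructor
      · rintro ⟨(rfl | rfl | rfl | rfl | rfl), hc⟩
        · exact absurd ((show u + 1 - 3 = u - 2 by ring) ▸ hc) hm2
        · exact absurd ((show u + 1 - 1 = u by ring) ▸ hc) h0
        · exact absurd hc h1
        · show u + 1 + 1 = u + 2; ring
        · exact absurd ((show u + 1 + 3 = u + 4 by ring) ▸ hc) h4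
      · rintro rfl
        exact ⟨Or.inr (Or.inr (Or.inr (Or.inl (by ring)))), h2⟩
    have e5 : iset C (u + 5) = {u + 2} := by
      ext y
      simp only [iset, nbhd, Finset.mem_inter, Finset.mem_insert, Finset.mem_singleton]
      constructor
      · rintro ⟨(rfl | rfl | rfl | rfl | rfl), hc⟩
        · show u + 5 - 3 = u + 2; ring
        · exact absurd ((show u + 5 - 1 = u + 4 by ring) ▸ hc) h4
        · exact absurd hc h5
        · exact absurd ((show u + 5 + 1 = u + 6 by ring) ▸ hc) h6
        · exact absurd ((show u + 5 + 3 = u + 8 by ring) ▸ hc) h8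
      · rintro rfl
        exact ⟨Or.inl (by ring), h2⟩
    exact hC.2 (u + 1) (u + 5) h15 (e1.trans e5.symm)
  -- u - 1 ∈ C
  have hm1 : u - 1 ∈ C := by
    by_contra hm1
    have e2 : iset C (u + 2) = {u + 2, u + 3} := by
      ext y
      simp only [iset, nbhd, Finset.mem_inter, Finset.mem_insert, Finset.mem_singleton]
      constructor
      · rintro ⟨(rfl | rfl | rfl | rfl | rfl), hc⟩
        · exact absurd ((show u + 2 - 3 = u - 1 by ring) ▸ hc) hm1
        · exact absurd ((show u + 2 - 1 = u + 1 by ring) ▸ hc) h1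
        · exact Or.inl rfl
        · exact Or.inr (by show u + 2 + 1 = u + 3; ring)
        · exact absurd ((show u + 2 + 3 = u + 5 by ring) ▸ hc) h5
      · rintro (rfl | rfl)
        · exact ⟨Or.inr (Or.inr (Or.inl rfl)), h2⟩
        · exact ⟨Or.inr (Or.inr (Or.inr (Or.inl (by ring)))), h3⟩
    have e3 : iset C (u + 3) = {u + 2, u + 3} := by
      ext y
      simp only [iset, nbhd, Finset.mem_inter, Finset.mem_insert, Finset.mem_singleton]
      constructor
      · rintro ⟨(rfl | rfl | rfl | rfl | rfl), hc⟩
        · exact absurd ((show u + 3 - 3 = u by ring) ▸ hc) h0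
        · exact Or.inl (by show u + 3 - 1 = u + 2; ring)
        · exact Or.inr rfl
        · exact absurd ((show u + 3 + 1 = u + 4 by ring) ▸ hc) h4
        · exact absurd ((show u + 3 + 3 = u + 6 by ring) ▸ hc) h6
      · rintro (rfl | rfl)
        · exact ⟨Or.inr (Or.inl (by ring)), h2⟩
        · exact ⟨Or.inr (Or.inr (Or.inl rfl)), h3⟩
    exact hC.2 (u + 2) (u + 3) h23 (e2.trans e3.symm)
  -- u + 10 ∈ C
  have h10 : u + 10 ∈ C := by
    by_contra h10
    obtain ⟨y, hy⟩ := hC.1 (u + 7)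
    simp only [iset, nbhd, Finset.mem_inter, Finset.mem_insert, Finset.mem_singleton] at hy
    obtain ⟨(rfl | rfl | rfl | rfl | rfl), hc⟩ := hy
    · exact absurd ((show u + 7 - 3 = u + 4 by ring) ▸ hc) h4
    · exact absurd ((show u + 7 - 1 = u + 6 by ring) ▸ hc) h6
    · exact absurd hc h7
    · exact absurd ((show u + 7 + 1 = u + 8 by ring) ▸ hc) h8
    · exact absurd ((show u + 7 + 3 = u + 10 by ring) ▸ hc) h10
  exact ⟨hm2, hm1, h9, h10⟩
end

section
/- Let C be an identifying code in C_n(1,3) with n ≥ 14. Then every codeword c ∈ C satisfies s(C;c) ≤ 17/6 + 1/2 (indeed s(C;c) is the sum over u ∈ N[c] of 1/|I(C;u)|, which is at most 10/3). -/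
/-- The share of a codeword in `C_n(1,3)`. -/
def share {n : ℕ} (C : Finset (ZMod n)) (c : ZMod n) : ℚ :=
  ∑ u ∈ nbhd c, (1 : ℚ) / (iset C u).card

/-!
Every neighbour `u` of the codeword `c` has `c ∈ I(C;u)`, so `|I(C;u)| = 1` forces `I(C;u) = {c}`;
since identifying sets are distinct, this happens for at most one `u`. Hence at most one of the
(at most five) terms of the share is `1`, the others are at most `1/2`, and `s(C;c) ≤ 3`.
-/

section

variable {n : ℕ}

theorem mem_nbhd_comm {u v : ZMod n} : u ∈ nbhd v ↔ v ∈ nbhd u := by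
  simp only [nbhd, Finset.mem_insert, Finset.mem_singleton]
  constructor <;> rintro (rfl | rfl | rfl | rfl | rfl) <;> simp

theorem card_nbhd_le (u : ZMod n) : (nbhd u).card ≤ 5 :=
  Finset.card_le_five

theorem mem_iset_of_mem_nbhd {C : Finset (ZMod n)} {c u : ZMod n} (hc : c ∈ C)
    (hu : u ∈ nbhd c) : c ∈ iset C u :=
  Finset.mem_inter.mpr ⟨mem_nbhd_comm.mp hu, hc⟩

theorem one_div_card_iset_le {C : Finset (ZMod n)} (hC : IsIdentifying C) {c u : ZMod n}
    (hcu : c ∈ iset C u) :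
    (1 : ℚ) / (iset C u).card ≤ 1 / 2 + 1 / 2 * (if iset C u = {c} then 1 else 0) := by
  split_ifs with hsingle
  · rw [hsingle, Finset.card_singleton]
    norm_num
  · have htwo : 2 ≤ (iset C u).card := by
      by_contra! hlt
      have hone : (iset C u).card = 1 := by
        have := (hC.1 u).card_pos
        omega
      obtain ⟨a, ha⟩ := Finset.card_eq_one.mp hone
      rw [ha, Finset.mem_singleton] at hcu
      exact hsingle (hcu ▸ ha)
    have htwo' : (2 : ℚ) ≤ (iset C u).card := by exact_mod_cast htwo
    rw [div_le_iff₀ (by linarith)]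
    linarith

theorem IsIdentifying.card_filter_iset_eq_singleton_le_one {C : Finset (ZMod n)}
    (hC : IsIdentifying C) (s : Finset (ZMod n)) (c : ZMod n) :
    (s.filter fun u => iset C u = {c}).card ≤ 1 := by
  refine Finset.card_le_one.mpr fun u hu v hv => ?_
  by_contra huv
  exact hC.2 u v huv ((Finset.mem_filter.mp hu).2.trans (Finset.mem_filter.mp hv).2.symm)

end

theorem share_le_general (n : ℕ) (C : Finset (ZMod n))
    (hC : IsIdentifying C) (c : ZMod n) (hc : c ∈ C) :
    share C c ≤ 17 / 6 + 1 / 2 := by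
  have hsum : share C c ≤ ∑ u ∈ nbhd c, (1 / 2 + 1 / 2 * (if iset C u = {c} then 1 else 0)) :=
    Finset.sum_le_sum fun u hu => one_div_card_iset_le hC (mem_iset_of_mem_nbhd hc hu)
  rw [Finset.sum_add_distrib, ← Finset.mul_sum, Finset.sum_boole, Finset.sum_const,
    nsmul_eq_mul] at hsum
  have hcard : ((nbhd c).card : ℚ) ≤ 5 := by exact_mod_cast card_nbhd_le c
  have hsingle : (((nbhd c).filter fun u => iset C u = {c}).card : ℚ) ≤ 1 := by
    exact_mod_cast hC.card_filter_iset_eq_singleton_le_one (nbhd c) c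
  linarith

theorem share_le (n : ℕ) (hn : 14 ≤ n) (C : Finset (ZMod n))
    (hC : IsIdentifying C) (c : ZMod n) (hc : c ∈ C) :
    share C c ≤ 17 / 6 + 1 / 2 :=
  share_le_general n C hC c hc
end

section
/- The set {0,1,2,9,10,11} is a locating-dominating code of cardinality 6 in C_{14}(1,3) and also in C_{15}(1,3), and no locating-dominating code of cardinality 5 exists in either graph; hence γ^LD(C_{14}(1,3)) = γ^LD(C_{15}(1,3)) = 6. -/
/-!
Supersets of locating-dominating codes are locating-dominating, so a code with at most five
elements can be enlarged to one with exactly five. Encoding a subset of `ZMod n` by the bitmask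
`∑ x ∈ C, 2 ^ x.val` turns intersections into `&&&` and makes the encoding injective, so the
locating-dominating property becomes a statement about natural numbers, checked exhaustively
for all `2002` (resp. `3003`) five-element subsets of `ZMod 14` (resp. `ZMod 15`).
-/

open Finset

variable {n : ℕ}

lemma IsLocDom.mono {C C' : Finset (ZMod n)} (h : C ⊆ C') (hC : IsLocDom C) :
    IsLocDom C' := by
  obtain ⟨hdom, hsep⟩ := hC
  have iset_eq : ∀ w : ZMod n, iset C w = iset C' w ∩ C := fun w => by
    simp only [iset, inter_assoc, inter_eq_right.mpr h]
  refine ⟨fun u => (hdom u).mono (inter_subset_inter le_rfl h), ?_⟩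
  intro u v hu hv huv heq
  exact hsep u v (fun hc => hu (h hc)) (fun hc => hv (h hc)) huv
    (by rw [iset_eq u, iset_eq v, heq])

def bitMask (C : Finset (ZMod n)) : ℕ := ∑ x ∈ C, 2 ^ x.val

def nbhdMask (n u : ℕ) : ℕ :=
  2 ^ ((u + n - 3) % n) ||| 2 ^ ((u + n - 1) % n) ||| 2 ^ u |||
    2 ^ ((u + 1) % n) ||| 2 ^ ((u + 3) % n)

def IsLocDomMask (n m : ℕ) : Prop :=
  (∀ u < n, nbhdMask n u &&& m ≠ 0) ∧
    ∀ u < n, ∀ v < u, m.testBit u = false → m.testBit v = false →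
      nbhdMask n u &&& m ≠ nbhdMask n v &&& m

instance (n m : ℕ) : Decidable (IsLocDomMask n m) := by
  unfold IsLocDomMask; infer_instance

section BitMask

variable [NeZero n]

lemma bitMask_eq_sum_image (C : Finset (ZMod n)) :
    bitMask C = ∑ i ∈ C.image ZMod.val, 2 ^ i :=
  (sum_image fun _ _ _ _ h => ZMod.val_injective n h).symm

lemma testBit_bitMask (C : Finset (ZMod n)) (i : ℕ) :
    (bitMask C).testBit i ↔ i ∈ C.image ZMod.val := by
  rw [bitMask_eq_sum_image, ← Nat.mem_bitIndices, ← List.mem_toFinset,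
    toFinset_bitIndices_sum_two_pow]

lemma bitMask_injective : Function.Injective (bitMask (n := n)) := by
  intro s t h
  refine image_injective (ZMod.val_injective n) (ext fun i => ?_)
  rw [← testBit_bitMask, ← testBit_bitMask, h]

lemma bitMask_eq_zero_iff {C : Finset (ZMod n)} : bitMask C = 0 ↔ C = ∅ :=
  bitMask_injective.eq_iff' rfl

lemma bitMask_inter (s t : Finset (ZMod n)) : bitMask (s ∩ t) = bitMask s &&& bitMask t := by
  refine Nat.eq_of_testBit_eq fun i => Bool.eq_iff_iff.mpr ?_
  rw [Nat.testBit_land, Bool.and_eq_true, testBit_bitMask, testBit_bitMask, testBit_bitMask,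
    image_inter _ _ (ZMod.val_injective n), mem_inter]

lemma bitMask_union (s t : Finset (ZMod n)) : bitMask (s ∪ t) = bitMask s ||| bitMask t := by
  refine Nat.eq_of_testBit_eq fun i => Bool.eq_iff_iff.mpr ?_
  rw [Nat.testBit_lor, Bool.or_eq_true, testBit_bitMask, testBit_bitMask, testBit_bitMask,
    image_union, mem_union]

lemma bitMask_insert (x : ZMod n) (s : Finset (ZMod n)) :
    bitMask (insert x s) = 2 ^ x.val ||| bitMask s := by
  rw [insert_eq, bitMask_union, bitMask, sum_singleton]

lemma bitMask_nbhd (h3 : 3 ≤ n) (u : ZMod n) : bitMask (nbhd u) = nbhdMask n u.val := by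
  have val_eq : ∀ (x : ZMod n) (k : ℕ), x = k → x.val = k % n := fun x k h => by
    rw [h, ZMod.val_natCast]
  have hu : u = (u.val : ZMod n) := (ZMod.natCast_zmod_val u).symm
  have h₁ : (u - 3).val = (u.val + n - 3) % n := val_eq _ _ <| by
    rw [Nat.cast_sub (by omega)]; push_cast [ZMod.natCast_self, ← hu]; ring
  have h₂ : (u - 1).val = (u.val + n - 1) % n := val_eq _ _ <| by
    rw [Nat.cast_sub (by omega)]; push_cast [ZMod.natCast_self, ← hu]; ring
  have h₃ : (u + 1).val = (u.val + 1) % n := val_eq _ _ <| by push_cast [← hu]; rfl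
  have h₄ : (u + 3).val = (u.val + 3) % n := val_eq _ _ <| by push_cast [← hu]; rfl
  rw [nbhd, bitMask_insert, bitMask_insert, bitMask_insert, bitMask_insert, bitMask, sum_singleton,
    h₁, h₂, h₃, h₄, nbhdMask]
  simp only [Nat.lor_assoc]

lemma bitMask_iset (h3 : 3 ≤ n) (C : Finset (ZMod n)) (u : ZMod n) :
    bitMask (iset C u) = nbhdMask n u.val &&& bitMask C := by
  rw [iset, bitMask_inter, bitMask_nbhd h3]

theorem IsLocDom.isLocDomMask (h3 : 3 ≤ n) {C : Finset (ZMod n)} (hC : IsLocDom C) :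
    IsLocDomMask n (bitMask C) := by
  have bitMask_iset_natCast : ∀ u < n, bitMask (iset C u) = nbhdMask n u &&& bitMask C :=
    fun u hu => by rw [bitMask_iset h3, ZMod.val_cast_of_lt hu]
  have not_mem : ∀ u < n, (bitMask C).testBit u = false → (u : ZMod n) ∉ C :=
    fun u hu h hCu => by
      rw [← Bool.not_eq_true, testBit_bitMask, mem_image] at h
      exact h ⟨u, hCu, ZMod.val_cast_of_lt hu⟩
  refine ⟨fun u hu h => ?_, fun u hu v hv hCu hCv h => ?_⟩
  · rw [← bitMask_iset_natCast u hu, bitMask_eq_zero_iff] at h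
    exact (hC.1 u).ne_empty h
  · have hvn : v < n := hv.trans hu
    rw [← bitMask_iset_natCast u hu, ← bitMask_iset_natCast v hvn] at h
    refine hC.2 u v (not_mem u hu hCu) (not_mem v hvn hCv) (fun huv => hv.ne' ?_)
      (bitMask_injective h)
    rw [← ZMod.val_cast_of_lt hu, ← ZMod.val_cast_of_lt hvn, huv]

theorem lt_card_of_isLocDom {k : ℕ} (h3 : 3 ≤ n) (hkn : k ≤ n)
    (hsearch : ∀ s ∈ (range n).powersetCard k, ¬ IsLocDomMask n (∑ i ∈ s, 2 ^ i))
    {C : Finset (ZMod n)} (hC : IsLocDom C) : k < C.card := by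
  by_contra! hCk
  obtain ⟨C', hCC', hC'k⟩ := exists_superset_card_eq hCk (by rwa [ZMod.card])
  refine hsearch (C'.image ZMod.val) (mem_powersetCard.mpr ⟨?_, ?_⟩) ?_
  · exact image_subset_iff.mpr fun x _ => mem_range.mpr (ZMod.val_lt x)
  · rwa [card_image_of_injective _ (ZMod.val_injective n)]
  · rw [← bitMask_eq_sum_image]
    exact (hC.mono hCC').isLocDomMask h3

end BitMask

theorem not_isLocDomMask_14 :
    ∀ s ∈ (range 14).powersetCard 5, ¬ IsLocDomMask 14 (∑ i ∈ s, 2 ^ i) := by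
  decide +kernel

theorem not_isLocDomMask_15 :
    ∀ s ∈ (range 15).powersetCard 5, ¬ IsLocDomMask 15 (∑ i ∈ s, 2 ^ i) := by
  decide +kernel

theorem gammaLD_14_15 :
    IsLocDom ({0, 1, 2, 9, 10, 11} : Finset (ZMod 14)) ∧
    ({0, 1, 2, 9, 10, 11} : Finset (ZMod 14)).card = 6 ∧
    (∀ C : Finset (ZMod 14), IsLocDom C → 6 ≤ C.card) ∧
    IsLocDom ({0, 1, 2, 9, 10, 11} : Finset (ZMod 15)) ∧
    ({0, 1, 2, 9, 10, 11} : Finset (ZMod 15)).card = 6 ∧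
    (∀ C : Finset (ZMod 15), IsLocDom C → 6 ≤ C.card) :=
  ⟨by unfold IsLocDom; decide, rfl,
    fun _ hC => lt_card_of_isLocDom (by norm_num) (by norm_num) not_isLocDomMask_14 hC,
    by unfold IsLocDom; decide, rfl,
    fun _ hC => lt_card_of_isLocDom (by norm_num) (by norm_num) not_isLocDomMask_15 hC⟩
end

section
/- Let n > 17 be an integer with n ≡ 3 (mod 6) or n ≡ 2 (mod 3), and let C be a locating-dominating code in C_n(1,3) such that C contains no occurrence of the pattern S3 (i.e., there is no vertex u with u−7, u−6, u−1, u, u+5, u+6 ∈ C and u−5, u−4, u−3, u−2, u+1, u+2, u+3, u+4 ∉ C). Then |C| > ⌈n/3⌉. -/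
open Finset

theorem card_mul_le_mul_sum_of_potential {α : Type*} [Fintype α] (σ : Equiv.Perm α)
    (F w : α → ℕ) {a b : ℕ} (h : ∀ x, F (σ x) + a ≤ F x + b * w x) :
    Fintype.card α * a ≤ b * ∑ x, w x := by
  have hsum := Finset.sum_le_sum fun x (_ : x ∈ univ) => h x
  rw [sum_add_distrib, sum_add_distrib, Equiv.sum_comp σ F, ← mul_sum, sum_const, card_univ,
    smul_eq_mul] at hsum
  omega

namespace Circulant13

variable {n : ℕ} (C : Finset (ZMod n))

def window (s : ZMod n) : ℕ → ℕ
  | 0 => 0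
  | k + 1 => Nat.bit (decide (s ∈ C)) (window (s + 1) k)

theorem testBit_window (s : ZMod n) (k j : ℕ) :
    (window C s k).testBit j = decide (j < k ∧ s + j ∈ C) := by
  induction k generalizing s j with
  | zero => simp [window]
  | succ k ih =>
    cases j with
    | zero => simp [window]
    | succ j =>
      rw [window, Nat.testBit_bit_succ, ih]
      simp only [Nat.add_lt_add_iff_right, Nat.cast_succ, add_assoc, add_comm (1 : ZMod n)]

theorem window_lt (s : ZMod n) (k : ℕ) : window C s k < 2 ^ k :=
  Nat.lt_pow_two_of_testBit _ fun j hj => by simp [testBit_window]; omega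

theorem window_div_two_pow_mod_two_pow (s : ZMod n) (i k m : ℕ) :
    window C s (i + k + m) / 2 ^ i % 2 ^ k = window C (s + i) k := by
  refine Nat.eq_of_testBit_eq fun j => ?_
  simp only [Nat.testBit_mod_two_pow, Nat.testBit_div_two_pow, testBit_window]
  by_cases hj : j < k
  · have hji : j + i < i + (k + m) := by omega
    simp only [hj, hji, true_and, decide_true, Bool.true_and, Nat.cast_add, add_assoc,
      add_comm (j : ZMod n)]
  · simp [hj]

theorem window_one (s : ZMod n) : window C s 1 = if s ∈ C then 1 else 0 := by
  by_cases hs : s ∈ C <;> simp [window, hs, Nat.bit]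

/-- The set bits `0, 2, 3, 4, 6` are the offsets of `N[p + 3]` from `p`. -/
def nbhdMask : ℕ := 0b1011101

def localCode (e p : ℕ) : ℕ := e &&& nbhdMask <<< p

theorem testBit_nbhdMask (i : ℕ) :
    nbhdMask.testBit i = decide (i ∈ ({0, 2, 3, 4, 6} : Finset ℕ)) := by
  rcases lt_or_ge i 7 with hi | hi
  · interval_cases i <;> decide
  · have hlt : nbhdMask < 2 ^ i := lt_of_lt_of_le (by decide) (Nat.pow_le_pow_right two_pos hi)
    rw [Nat.testBit_lt_two_pow hlt]
    simp only [mem_insert, mem_singleton, Bool.false_eq, decide_eq_false_iff_not]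
    omega

theorem mem_nbhd_add_three_iff (s : ZMod n) (p : ℕ) (t : ZMod n) :
    t ∈ nbhd (s + ((p + 3 : ℕ) : ZMod n)) ↔
      ∃ i ∈ ({0, 2, 3, 4, 6} : Finset ℕ), t = s + ((p + i : ℕ) : ZMod n) := by
  simp only [nbhd, mem_insert, mem_singleton, exists_eq_or_imp, exists_eq_left]
  push_cast
  ring_nf

theorem mem_iset_iff_testBit_localCode (s : ZMod n) {k p : ℕ} (hp : p + 6 < k) (t : ZMod n) :
    t ∈ iset C (s + ((p + 3 : ℕ) : ZMod n)) ↔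
      ∃ j, (localCode (window C s k) p).testBit j ∧ t = s + j := by
  simp only [iset, mem_inter, mem_nbhd_add_three_iff, localCode, Nat.testBit_and, testBit_window,
    Nat.testBit_shiftLeft, testBit_nbhdMask, Bool.and_eq_true, decide_eq_true_eq]
  constructor
  · rintro ⟨⟨i, hi, rfl⟩, htC⟩
    have hi6 : i ≤ 6 := by simp only [mem_insert, mem_singleton] at hi; omega
    exact ⟨p + i, ⟨⟨by omega, htC⟩, by omega, by simpa using hi⟩, rfl⟩
  · rintro ⟨j, ⟨⟨-, hjC⟩, hpj, hi⟩, rfl⟩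
    exact ⟨⟨j - p, hi, by rw [Nat.add_sub_cancel' hpj]⟩, hjC⟩

theorem iset_eq_of_localCode_eq (s : ZMod n) {k p q : ℕ} (hp : p + 6 < k) (hq : q + 6 < k)
    (h : localCode (window C s k) p = localCode (window C s k) q) :
    iset C (s + ((p + 3 : ℕ) : ZMod n)) = iset C (s + ((q + 3 : ℕ) : ZMod n)) := by
  ext t
  rw [mem_iset_iff_testBit_localCode C s hp, mem_iset_iff_testBit_localCode C s hq, h]

theorem localCode_ne_zero_of_iset_nonempty (s : ZMod n) {k p : ℕ} (hp : p + 6 < k)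
    (h : (iset C (s + ((p + 3 : ℕ) : ZMod n))).Nonempty) : localCode (window C s k) p ≠ 0 := by
  obtain ⟨t, ht⟩ := h
  obtain ⟨j, hj, -⟩ := (mem_iset_iff_testBit_localCode C s hp t).1 ht
  rintro h0
  simp [h0] at hj

def ContainsS3 (C : Finset (ZMod n)) : Prop :=
  ∃ u : ZMod n,
    u - 7 ∈ C ∧ u - 6 ∈ C ∧ u - 1 ∈ C ∧ u ∈ C ∧ u + 5 ∈ C ∧ u + 6 ∈ C ∧
    u - 5 ∉ C ∧ u - 4 ∉ C ∧ u - 3 ∉ C ∧ u - 2 ∉ C ∧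
    u + 1 ∉ C ∧ u + 2 ∉ C ∧ u + 3 ∉ C ∧ u + 4 ∉ C

variable {C}

theorem window_ne_of_not_containsS3 (hS3 : ¬ ContainsS3 C)
    (s : ZMod n) : window C s 14 ≠ 0b11000011000011 := by
  intro h
  have hpat : ∀ j : Fin 14, (0b11000011000011 : ℕ).testBit j =
      decide ((j : ℕ) ∈ ({0, 1, 6, 7, 12, 13} : Finset ℕ)) := by decide
  have hmem : ∀ j : Fin 14,
      s + ((j : ℕ) : ZMod n) ∈ C ↔ (j : ℕ) ∈ ({0, 1, 6, 7, 12, 13} : Finset ℕ) := fun j => by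
    simpa only [testBit_window, j.isLt, true_and, hpat, decide_eq_decide] using
      congrArg (Nat.testBit · j) h
  norm_num [Fin.forall_fin_succ] at hmem
  refine hS3 ⟨s + 7, ?_⟩
  ring_nf at hmem ⊢
  tauto

/-- Bit `j` of `e` stands for the vertex `s + j`: `e` passes the locating-dominating conditions at
the eight vertices `s + 3, …, s + 10` whose neighbourhoods it contains, and is not the pattern S3
centred at `s + 7`. -/
def isAdmissible (e : ℕ) : Bool :=
  (List.range 8).all (fun p => localCode e p != 0) &&
  (List.range 8).all (fun p => (List.range 8).all fun q =>
    p == q || e.testBit (p + 3) || e.testBit (q + 3) || localCode e p != localCode e q) &&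
  e != 0b11000011000011

theorem add_natCast_ne_add_natCast (s : ZMod n) {a b : ℕ} (ha : a < n) (hb : b < n)
    (hab : a ≠ b) : s + (a : ZMod n) ≠ s + (b : ZMod n) := fun h => hab <| by
  simpa [ZMod.natCast_eq_natCast_iff' a b n, Nat.mod_eq_of_lt ha, Nat.mod_eq_of_lt hb] using
    add_left_cancel h

theorem isAdmissible_window (hn : 10 < n) (hC : IsLocDom C)
    (hS3 : ¬ ContainsS3 C) (s : ZMod n) : isAdmissible (window C s 14) = true := by
  simp only [isAdmissible, Bool.and_eq_true, List.all_eq_true, List.mem_range, bne_iff_ne, ne_eq,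
    Bool.or_eq_true, beq_iff_eq]
  refine ⟨⟨fun p hp => localCode_ne_zero_of_iset_nonempty C s (by omega) (hC.1 _),
    fun p hp q hq => ?_⟩, window_ne_of_not_containsS3 hS3 s⟩
  by_contra! hpq
  obtain ⟨⟨⟨hne, hpC⟩, hqC⟩, hcode⟩ := hpq
  simp only [testBit_window, show p + 3 < 14 by omega, show q + 3 < 14 by omega, true_and,
    ne_eq, Bool.not_eq_true, decide_eq_false_iff_not] at hpC hqC
  exact hC.2 _ _ hpC hqC
    (add_natCast_ne_add_natCast s (by omega) (by omega) (by omega))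
    (iset_eq_of_localCode_eq C s (by omega) (by omega) hcode)

/-- Entry `w` (bits `7 w, …, 7 w + 6`) is the potential of the 10-bit window `w`: shortest-path
distances, computed by Bellman–Ford and shifted to be nonnegative, in the graph whose edges are the
shifts of admissible 14-bit windows `e`, weighted `33 * (e / 2 % 2) - 12`. -/
def potentialTable : ℕ := 0x30c181290c240054c301290c300030da11290dbc0054db01290dbc0030c18129cc2d0054c301e9d5480030da1129cdbc0054db02a9d8480030c181290c2400550b312912390030da11290dbc126d5332b219c80030c18129cc2d00550b31e9d5480030da1129cdbc128553337219c80030c181290c240054c301290c300030da12ab523f0054db02ac15450030c18129cc2d0054c301e9d5480054da72ad923f00864483cfe4480030c181290c2400550b312912390030da12ab523f126d5332b219c80030c18129cc2d00550b31e9d5480054dad2ad923f129e4483d224480030c181290c240054c301290c300030da11290dbc0054db01290dbc0030c18129cc2d0120c481f215480030da1129cdbc0120dc82b218480030c181290c2400550b312912390030da11290dbc126d5332b219c80030c21129cc3301210c81f215480030dad9122448132154891224480030c181290c240054c301290c300030da12ab523f0054db02ac15450030c18129cc2d0120c481f215480054da72ad923f01224483d224480030c181290c2400550b312912390030da12ab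523f126d5332b219c80030c21129cc3c01210c81f215480054db39122448132244891224480030c181290c240054c301290c300030da11290dbc0054db01290dbc0030c18129cc2d0054c301e9d5480030da1129cdbc0054db02a9d8480030c181290c2400550b3129123900324481292448126e4482b224480030c18129cc2d00550b31e9d5480032448129e448128644837224480030c181290c240054c301290c300030da12ab523f0054db02ac15450030c18129cc2d0054c301e9d5480054da72ad923f00864483cfe4480030c181290f2d00550b3129153f00324482ab6448126e4482b224480030c18129cf399122448912244800564482ada448912244891224480030c181290c240054c301290c300030da11290dbc0054db01290dbc0030c18129cc2d0120c481f215480030da1129cdbc0120dc82b218480030c181290c2400550b3129123900324481292448126e4482b224480030c21129cc3301210c81f2154800324489122448132244891224480030c181290c240054c301290c300030da12ab523f0054db02ac15450030c18129cc2d0120c481f215480054da72ad923f01224483d224480030c181290f2d00550b3129154800324482ab6448126e4482b224480030c21129cf3f912244891224480056448912244891224489122448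

def potential (w : ℕ) : ℕ := potentialTable / 2 ^ (7 * w) % 2 ^ 7

/-- `allBelow f d lo` checks `f` on `[lo, lo + 2 ^ d)`; splitting in halves keeps the kernel's
recursion depth at `d`. -/
def allBelow (f : ℕ → Bool) : ℕ → ℕ → Bool
  | 0, lo => f lo
  | d + 1, lo => allBelow f d lo && allBelow f d (lo + 2 ^ d)

theorem forall_lt_of_allBelow {f : ℕ → Bool} {d lo : ℕ} (h : allBelow f d lo = true) :
    ∀ i < 2 ^ d, f (lo + i) = true := by
  induction d generalizing lo with
  | zero => intro i hi; simpa [show i = 0 by omega, allBelow] using h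
  | succ d ih =>
    obtain ⟨hlo, hhi⟩ := Bool.and_eq_true_iff.mp h
    intro i hi
    rcases lt_or_ge i (2 ^ d) with hid | hid
    · exact ih hlo i hid
    · have hi' : i - 2 ^ d < 2 ^ d := by rw [pow_succ] at hi; omega
      simpa [add_assoc, Nat.add_sub_cancel' hid] using ih hhi (i - 2 ^ d) hi'

theorem potential_drop_of_isAdmissible (e : ℕ) (he : e < 2 ^ 14) (hadm : isAdmissible e = true) :
    potential (e / 2 ^ 2 % 2 ^ 10) + 12 ≤ potential (e / 2 % 2 ^ 10) + 33 * (e / 2 % 2) := by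
  have hall : allBelow (fun e => decide (potential (e / 2 ^ 2 % 2 ^ 10) + 12 ≤
      potential (e / 2 % 2 ^ 10) + 33 * (e / 2 % 2)) || !isAdmissible e) 14 0 = true := by
    decide +kernel
  simpa [hadm] using forall_lt_of_allBelow hall e he

theorem potential_window_add_one_add_le (hn : 10 < n)
    (hC : IsLocDom C) (hS3 : ¬ ContainsS3 C) (v : ZMod n) :
    potential (window C (v + 1) 10) + 12 ≤
      potential (window C v 10) + 33 * (if v ∈ C then 1 else 0) := by
  have h := potential_drop_of_isAdmissible _ (window_lt C (v - 1) 14)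
    (isAdmissible_window hn hC hS3 (v - 1))
  have hnext := window_div_two_pow_mod_two_pow C (v - 1) 2 10 2
  have hcur := window_div_two_pow_mod_two_pow C (v - 1) 1 10 3
  have hbit := window_div_two_pow_mod_two_pow C (v - 1) 1 1 12
  simp only [pow_one, Nat.reduceAdd, Nat.cast_ofNat, Nat.cast_one, sub_add_cancel]
    at hnext hcur hbit
  rw [show v - 1 + 2 = v + 1 by ring] at hnext
  rwa [hnext, hcur, hbit, window_one] at h

theorem four_mul_le_eleven_mul_card (hn : 10 < n)
    (hC : IsLocDom C) (hS3 : ¬ ContainsS3 C) : 4 * n ≤ 11 * C.card := by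
  have : NeZero n := ⟨by omega⟩
  have h := card_mul_le_mul_sum_of_potential (Equiv.addRight 1)
    (fun v => potential (window C v 10)) (fun v => if v ∈ C then 1 else 0)
    (potential_window_add_one_add_le hn hC hS3)
  simp only [ZMod.card, sum_boole, filter_mem_eq_inter, univ_inter, Nat.cast_id] at h
  omega

end Circulant13

theorem no_S3_lower_bound (n : ℕ) (hn : 17 < n) (h : n % 6 = 3 ∨ n % 3 = 2)
    (C : Finset (ZMod n)) (hC : IsLocDom C)
    (hS3 : ¬ ∃ u : ZMod n,
      u - 7 ∈ C ∧ u - 6 ∈ C ∧ u - 1 ∈ C ∧ u ∈ C ∧ u + 5 ∈ C ∧ u + 6 ∈ C ∧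
      u - 5 ∉ C ∧ u - 4 ∉ C ∧ u - 3 ∉ C ∧ u - 2 ∉ C ∧
      u + 1 ∉ C ∧ u + 2 ∉ C ∧ u + 3 ∉ C ∧ u + 4 ∉ C) :
    (n + 2) / 3 < C.card := by
  have := Circulant13.four_mul_le_eleven_mul_card (by omega) hC hS3
  omega
end
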